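/- arXiv:1104.3054 — 2 statements merged into one kernel-verified Lean document; each statement's English description precedes it below -/
import Mathlib

section
/- Consider the Markov chain gadget with states q, s₀, s₁, r₀, r₁ where from q one moves to s₀ with probability 1/3 and to s₁ with probability 2/3; from s₀ one returns to q with probability 1/3 and moves to r₀ with probability 2/3; from s₁ one returns to q with probability 2/3 and moves to r₁ with probability 1/3; and r₀, r₁ are absorbing. Then starting from q, the probability of eventually being absorbed in r₀ equals 1/2, and likewise for r₁. -/
/-!
Over two steps the chain started at `q` returns to `q` with probability `1/9 + 4/9 = 5/9` and
is otherwise absorbed, in `r₀` and in `r₁` with the same probability `2/9`. Hence after `2k`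
steps each absorbing state holds mass `(1 - (5/9)^k) / 2`. The mass in an absorbing state is
nondecreasing in time, so the limit along even times is the limit.
-/

/-- Transition matrix of the 1/3–2/3 gadget, on states
`0 = q`, `1 = s₀`, `2 = s₁`, `3 = r₀`, `4 = r₁`. -/
noncomputable def gadget : Matrix (Fin 5) (Fin 5) ℝ :=
  !![0, 1/3, 2/3, 0, 0;
     1/3, 0, 0, 2/3, 0;
     2/3, 0, 0, 0, 1/3;
     0, 0, 0, 1, 0;
     0, 0, 0, 0, 1]

open Filter Topology

namespace Matrix

variable {R n : Type*} [Semiring R] [Fintype n] [DecidableEq n] {M : Matrix n n R} {j : n}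

theorem pow_row_eq_single_of_row_eq_single (h : M j = Pi.single j 1) (p : ℕ) :
    (M ^ p) j = Pi.single j 1 := by
  induction p with
  | zero => ext l; simp [one_apply, Pi.single_apply, eq_comm]
  | succ p ih => rw [pow_succ, mul_apply_eq_vecMul, ih, single_one_vecMul, row, h]

theorem monotone_pow_apply_of_apply_self_eq_one [PartialOrder R] [IsOrderedRing R]
    (hM : M ∈ rowStochastic R n) (hj : M j j = 1) (i : n) : Monotone fun p => (M ^ p) i j := by
  refine monotone_nat_of_le_succ fun p => ?_
  have hMp := (mem_rowStochastic.1 (pow_mem hM p)).1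
  have hM := (mem_rowStochastic.1 hM).1
  calc (M ^ p) i j = (M ^ p) i j * M j j := by rw [hj, mul_one]
    _ ≤ ∑ l, (M ^ p) i l * M l j :=
      Finset.single_le_sum (fun l _ => mul_nonneg (hMp i l) (hM l j)) (Finset.mem_univ j)
    _ = (M ^ (p + 1)) i j := by rw [pow_succ, mul_apply]

end Matrix

open Matrix

theorem gadget_mem_rowStochastic : gadget ∈ rowStochastic ℝ (Fin 5) := by
  refine mem_rowStochastic_iff_sum.2 ⟨fun i j => ?_, fun i => ?_⟩ <;>
    fin_cases i <;> try fin_cases j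
  all_goals simp [gadget, Fin.sum_univ_five]
  all_goals norm_num

theorem gadget_row_three : gadget 3 = Pi.single 3 1 := by
  ext l; fin_cases l <;> simp [gadget]

theorem gadget_row_four : gadget 4 = Pi.single 4 1 := by
  ext l; fin_cases l <;> simp [gadget]

theorem gadget_sq_row_zero : (gadget ^ 2) 0 = ![5/9, 0, 0, 2/9, 2/9] := by
  ext l; fin_cases l <;> simp [sq, mul_apply, Fin.sum_univ_five, gadget] <;> norm_num

theorem gadget_pow_two_mul_apply (k : ℕ) {j : Fin 5} (hj : j = 3 ∨ j = 4) :
    (gadget ^ (2 * k)) 0 j = (1 - (5/9 : ℝ) ^ k) / 2 := by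
  induction k with
  | zero => rcases hj with rfl | rfl <;> simp
  | succ k ih =>
    have h3 := congrFun (pow_row_eq_single_of_row_eq_single gadget_row_three (2 * k)) j
    have h4 := congrFun (pow_row_eq_single_of_row_eq_single gadget_row_four (2 * k)) j
    rw [show 2 * (k + 1) = 2 + 2 * k by ring, pow_add, mul_apply, Fin.sum_univ_five,
      gadget_sq_row_zero, h3, h4, ih]
    rcases hj with rfl | rfl <;> simp <;> ring

theorem tendsto_gadget_pow_apply {j : Fin 5} (hj : j = 3 ∨ j = 4) :
    Tendsto (fun p => (gadget ^ p) 0 j) atTop (𝓝 (1/2)) := by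
  rw [tendsto_iff_tendsto_subseq_of_monotone
    (monotone_pow_apply_of_apply_self_eq_one gadget_mem_rowStochastic ?_ 0)
    (tendsto_id.const_mul_atTop' two_pos)]
  · have h := ((tendsto_pow_atTop_nhds_zero_of_lt_one (r := (5/9 : ℝ)) (by norm_num)
      (by norm_num)).const_sub 1).div_const 2
    rw [sub_zero] at h
    exact h.congr fun k => (gadget_pow_two_mul_apply k hj).symm
  · rcases hj with rfl | rfl <;> rfl

/-- starting from `q`, the probability of being in the absorbing
state `r₀` after `p` steps converges to `1/2`, and likewise for `r₁`. -/
theorem stmt_3 :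
    Filter.Tendsto (fun p : ℕ => (gadget ^ p) 0 3) Filter.atTop (nhds (1/2)) ∧
    Filter.Tendsto (fun p : ℕ => (gadget ^ p) 0 4) Filter.atTop (nhds (1/2)) :=
  ⟨tendsto_gadget_pow_apply (.inl rfl), tendsto_gadget_pow_apply (.inr rfl)⟩
end

section
/- Let n = |Q| and suppose for each i < n, the action of the block ŵ_i = check(a,q_i)·*·apply(a,q_i) on distributions fixes all states q_j for j ≠ i (and all barred states), and sends δ_{q_i} to the barred version of the one-step distribution M_a(q_i). Then reading the concatenation ŵ_0 ⋯ ŵ_{n−1}·merge from any distribution δ over Q yields exactly the distribution δ·M_a over Q. -/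
variable {n : ℕ}

/-- Action of a stochastic matrix on a row vector. -/
def step {S : Type*} [Fintype S] (δ : S → ℝ) (N : S → S → ℝ) : S → ℝ :=
  fun t => ∑ s, δ s * N s t

/-- A vector over `Q = Fin n`, extended by `0` to `Fin n ⊕ Fin n`, where
`Sum.inr q` is the barred copy `q̄`. -/
def emb (δ : Fin n → ℝ) : Fin n ⊕ Fin n → ℝ
  | Sum.inl q => δ q
  | Sum.inr _ => 0

/-- The matrix of the `merge` letter: each barred state `q̄` is replaced by `q`. -/
def mergeMat : (Fin n ⊕ Fin n) → (Fin n ⊕ Fin n) → ℝ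
  | Sum.inl q, t => if t = Sum.inl q then 1 else 0
  | Sum.inr q, t => if t = Sum.inl q then 1 else 0

section Simulation

variable {M : Fin n → Fin n → ℝ} {δ : Fin n → ℝ}

theorem step_eq_update_add {S : Type*} [Fintype S] [DecidableEq S] (v : S → ℝ)
    (A : S → S → ℝ) (s₀ : S) (hA : ∀ s ≠ s₀, ∀ t, A s t = if t = s then 1 else 0) :
    step v A = Function.update v s₀ 0 + v s₀ • A s₀ := by
  funext t
  have hrest : ∑ s ∈ Finset.univ.erase s₀, v s * A s t = if t = s₀ then 0 else v t := by
    rw [Finset.sum_congr rfl fun s hs => by rw [hA s (Finset.ne_of_mem_erase hs), mul_ite,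
      mul_one, mul_zero], Finset.sum_ite_eq]
    by_cases ht : t = s₀ <;> simp [ht]
  simp only [step, ← Finset.add_sum_erase _ _ (Finset.mem_univ s₀), hrest, Pi.add_apply,
    Pi.smul_apply, smul_eq_mul, Function.update_apply]
  ring

theorem step_mergeMat (u w : Fin n → ℝ) : step (Sum.elim u w) mergeMat = emb (u + w) := by
  funext t
  cases t <;> simp [step, mergeMat, emb, Fintype.sum_sum_type]

def afterBlocks (M : Fin n → Fin n → ℝ) (δ : Fin n → ℝ) (A : Finset (Fin n)) :
    Fin n ⊕ Fin n → ℝ :=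
  Sum.elim (fun j => if j ∈ A then 0 else δ j) (fun q => ∑ s ∈ A, δ s * M s q)

theorem afterBlocks_empty : afterBlocks M δ ∅ = emb δ := by
  funext t
  cases t <;> simp [afterBlocks, emb]

theorem afterBlocks_univ :
    afterBlocks M δ Finset.univ = Sum.elim (0 : Fin n → ℝ) (fun q => ∑ s, δ s * M s q) := by
  simp only [afterBlocks, Finset.mem_univ, if_true]
  rfl

theorem step_afterBlocks (B : (Fin n ⊕ Fin n) → (Fin n ⊕ Fin n) → ℝ) (i : Fin n)
    (hfix : ∀ j, j ≠ i → ∀ t, B (.inl j) t = if t = .inl j then 1 else 0)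
    (hbar : ∀ q t, B (.inr q) t = if t = .inr q then 1 else 0)
    (hact_inl : ∀ j, B (.inl i) (.inl j) = 0) (hact_inr : ∀ q, B (.inl i) (.inr q) = M i q)
    (A : Finset (Fin n)) :
    step (afterBlocks M δ A) B = afterBlocks M δ (insert i A) := by
  have hB : ∀ s ≠ .inl i, ∀ t, B s t = if t = s then 1 else 0 := by
    rintro (j | q) hs t
    · exact hfix j (fun h => hs (h ▸ rfl)) t
    · exact hbar q t
  rw [step_eq_update_add _ _ _ hB]
  funext t
  rcases t with j | q
  · simp only [Pi.add_apply, Pi.smul_apply, smul_eq_mul, hact_inl, mul_zero, add_zero,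
      Function.update_apply, afterBlocks, Sum.elim_inl, Sum.inl.injEq, Finset.mem_insert, ite_or]
  · simp only [Pi.add_apply, Pi.smul_apply, smul_eq_mul, hact_inr, Function.update_apply,
      reduceCtorEq, if_false, afterBlocks, Sum.elim_inl, Sum.elim_inr]
    split_ifs with hi
    · rw [Finset.insert_eq_of_mem hi, zero_mul, add_zero]
    · rw [Finset.sum_insert hi, add_comm]

theorem foldl_step_afterBlocks (N : Fin n → (Fin n ⊕ Fin n) → (Fin n ⊕ Fin n) → ℝ)
    (hfix : ∀ i j, j ≠ i → ∀ t, N i (.inl j) t = if t = .inl j then 1 else 0)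
    (hbar : ∀ i q t, N i (.inr q) t = if t = .inr q then 1 else 0)
    (hact_inl : ∀ i j, N i (.inl i) (.inl j) = 0)
    (hact_inr : ∀ i q, N i (.inl i) (.inr q) = M i q) (l : List (Fin n)) (A : Finset (Fin n)) :
    (l.map N).foldl step (afterBlocks M δ A) = afterBlocks M δ (A ∪ l.toFinset) := by
  induction l generalizing A with
  | nil => simp
  | cons i l ih =>
    rw [List.map_cons, List.foldl_cons,
      step_afterBlocks _ i (hfix i) (hbar i) (hact_inl i) (hact_inr i), ih]
    simp [Finset.insert_union]

end Simulation

theorem stmt_15_general (M : Fin n → Fin n → ℝ)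
    (N : Fin n → (Fin n ⊕ Fin n) → (Fin n ⊕ Fin n) → ℝ)
    (hfix : ∀ i j, j ≠ i → ∀ t, N i (Sum.inl j) t = if t = Sum.inl j then 1 else 0)
    (hbar : ∀ i q t, N i (Sum.inr q) t = if t = Sum.inr q then 1 else 0)
    (hact : ∀ i t, N i (Sum.inl i) t = match t with
      | Sum.inl _ => 0
      | Sum.inr q' => M i q')
    (δ : Fin n → ℝ) :
    List.foldl step (emb δ) (List.ofFn N ++ [mergeMat])
      = emb (fun t => ∑ s, δ s * M s t) := by
  have hblocks := foldl_step_afterBlocks (M := M) (δ := δ) N hfix hbar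
    (fun i j => hact i (.inl j)) (fun i q => hact i (.inr q)) (List.finRange n) ∅
  rw [Finset.empty_union, List.toFinset_finRange, afterBlocks_empty, afterBlocks_univ] at hblocks
  rw [List.foldl_append, List.ofFn_eq_map, hblocks, List.foldl_cons, List.foldl_nil, step_mergeMat,
    zero_add]

/-- if for each `i < n` the action `N i` of the block
`ŵᵢ = check(a,qᵢ)·*·apply(a,qᵢ)` fixes all states `q_j` for `j ≠ i` and all
barred states, and sends `δ_{qᵢ}` to the barred version of the one-step
distribution `M_a(qᵢ)`, then reading `ŵ₀ ⋯ ŵ_{n−1}·merge` from any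
distribution `δ` over `Q` yields exactly the distribution `δ·M_a`. -/
theorem stmt_15 (M : Fin n → Fin n → ℝ)
    (hM0 : ∀ s t, 0 ≤ M s t) (hM1 : ∀ s, ∑ t, M s t = 1)
    (N : Fin n → (Fin n ⊕ Fin n) → (Fin n ⊕ Fin n) → ℝ)
    (hfix : ∀ i j, j ≠ i → ∀ t, N i (Sum.inl j) t = if t = Sum.inl j then 1 else 0)
    (hbar : ∀ i q t, N i (Sum.inr q) t = if t = Sum.inr q then 1 else 0)
    (hact : ∀ i t, N i (Sum.inl i) t = match t with
      | Sum.inl _ => 0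
      | Sum.inr q' => M i q')
    (δ : Fin n → ℝ) (hδ0 : ∀ q, 0 ≤ δ q) (hδ1 : ∑ q, δ q = 1) :
    List.foldl step (emb δ) (List.ofFn N ++ [mergeMat])
      = emb (fun t => ∑ s, δ s * M s t) :=
  stmt_15_general M N hfix hbar hact δ
end
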